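/- For p > 1 and ω > 0, the function u(x,y) = R_ω^{(p+1)/2}(x) cos y on ℝ × (ℝ/2πℤ) satisfies -∂_x²u - ∂_y²u + ωu - p R_ω^{p-1} u = (1 - ω/ω_p) u pointwise, where ω_p = 4/((p-1)(p+3)). In particular, when ω = ω_p the function R_{ω_p}^{(p+1)/2}(x) cos y lies in the kernel of the linearized operator -∂_x² - ∂_y² + ω_p - p R_{ω_p}^{p-1}. -/

import Mathlib

open Real MeasureTheory

/-- The line soliton `R_ω(x) = ω^{1/(p-1)} ((p+1)/2)^{1/(p-1)} sech^{2/(p-1)}((p-1)/2 √ω x)`. -/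
noncomputable def soliton (p ω x : ℝ) : ℝ :=
  ω ^ (1 / (p - 1)) * ((p + 1) / 2) ^ (1 / (p - 1)) *
    (1 / Real.cosh ((p - 1) / 2 * Real.sqrt ω * x)) ^ (2 / (p - 1))

/-!
With `a = (p-1)√ω/2` the soliton is `R_ω = (ω(p+1)/2)^{1/(p-1)} cosh(a x)^{-2/(p-1)}`, so every power
of it is a constant times a power of `cosh(a x)`, and `sinh² = cosh² - 1` gives
`(cosh(a x)^r)'' = a² r (r cosh^r - (r-1) cosh^(r-2))`. For `r = -(p+1)/(p-1)` the `cosh^(r-2)` term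
cancels against `p R_ω^{p-1} = p ω (p+1)/2 · cosh^{-2}`, leaving `-ω (p-1)(p+3)/4 = -ω/ω_p` times
`R_ω^{(p+1)/2}`; the factor `cos y` contributes `+1`.
-/

theorem hasDerivAt_cosh_mul_rpow (a r x : ℝ) :
    HasDerivAt (fun t => cosh (a * t) ^ r) (r * a * (sinh (a * x) * cosh (a * x) ^ (r - 1))) x := by
  convert (((hasDerivAt_id' x).const_mul a).cosh).rpow_const (p := r)
    (Or.inl (cosh_pos _).ne') using 1
  ring

theorem deriv_deriv_cosh_mul_rpow (a r x : ℝ) :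
    deriv (deriv fun t => cosh (a * t) ^ r) x
      = a ^ 2 * r * (r * cosh (a * x) ^ r - (r - 1) * cosh (a * x) ^ (r - 2)) := by
  have hc := cosh_pos (a * x)
  have hsinh : HasDerivAt (fun t => sinh (a * t)) (cosh (a * x) * (a * 1)) x :=
    ((hasDerivAt_id' x).const_mul a).sinh
  have h : HasDerivAt (fun t => r * a * (sinh (a * t) * cosh (a * t) ^ (r - 1)))
      (r * a * (cosh (a * x) * (a * 1) * cosh (a * x) ^ (r - 1)
        + sinh (a * x) * ((r - 1) * a * (sinh (a * x) * cosh (a * x) ^ (r - 1 - 1))))) x :=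
    (hsinh.mul (hasDerivAt_cosh_mul_rpow a (r - 1) x)).const_mul (r * a)
  rw [funext fun t => (hasDerivAt_cosh_mul_rpow a r t).deriv, h.deriv,
    sub_sub, one_add_one_eq_two, rpow_sub_one hc.ne', rpow_sub hc, rpow_two]
  field_simp
  linear_combination r * a ^ 2 * (r - 1) * sinh_sq (a * x)

theorem soliton_rpow {p ω : ℝ} (hp : 1 < p) (hω : 0 ≤ ω) (q x : ℝ) :
    soliton p ω x ^ q = (ω * ((p + 1) / 2)) ^ (q / (p - 1)) *
      cosh ((p - 1) / 2 * √ω * x) ^ (-(2 * q / (p - 1))) := by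
  have hc := cosh_pos ((p - 1) / 2 * √ω * x)
  have hp1 : p - 1 ≠ 0 := sub_ne_zero.mpr hp.ne'
  have hp2 : 0 ≤ (p + 1) / 2 := by linarith
  rw [soliton, ← mul_rpow hω hp2, one_div (cosh _), inv_rpow hc.le, ← rpow_neg hc.le,
    mul_rpow (by positivity) (by positivity), ← rpow_mul (by positivity),
    ← rpow_mul hc.le]
  congr 2 <;> field_simp

theorem soliton_rpow_linearized {p ω : ℝ} (hp : 1 < p) (hω : 0 ≤ ω) (x : ℝ) :
    -deriv (deriv fun t => soliton p ω t ^ ((p + 1) / 2)) x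
        + ω * soliton p ω x ^ ((p + 1) / 2)
        - p * soliton p ω x ^ (p - 1) * soliton p ω x ^ ((p + 1) / 2)
      = -(ω * ((p - 1) * (p + 3) / 4)) * soliton p ω x ^ ((p + 1) / 2) := by
  have hp1 : p - 1 ≠ 0 := sub_ne_zero.mpr hp.ne'
  have hc := cosh_pos ((p - 1) / 2 * √ω * x)
  have hr : -(2 * ((p + 1) / 2) / (p - 1)) * (p - 1) = -(p + 1) := by field_simp
  simp only [soliton_rpow hp hω, deriv_const_mul_field', deriv_deriv_cosh_mul_rpow]
  rw [div_self hp1, rpow_one, show -(2 * (p - 1) / (p - 1)) = -2 by field_simp]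
  generalize -(2 * ((p + 1) / 2) / (p - 1)) = r at hr ⊢
  rw [rpow_sub hc, rpow_neg hc.le, rpow_two, mul_pow, sq_sqrt hω]
  generalize cosh ((p - 1) / 2 * √ω * x) ^ r = u
  field_simp
  generalize cosh ((p - 1) * √ω * x / 2) = c
  generalize (ω * (p + 1) / 2) ^ ((p + 1) / (2 * (p - 1))) = K
  linear_combination 4 * ω * K * u * ((1 - c ^ 2) * (r * (p - 1) - (p + 1)) - (p - 1)) * hr

theorem soliton_cos_linearized {p ω : ℝ} (hp : 1 < p) (hω : 0 ≤ ω) (x y : ℝ) :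
    -(deriv (deriv (fun t => soliton p ω t ^ ((p + 1) / 2) * cos y)) x)
        - deriv (deriv (fun s => soliton p ω x ^ ((p + 1) / 2) * cos s)) y
        + ω * (soliton p ω x ^ ((p + 1) / 2) * cos y)
        - p * soliton p ω x ^ (p - 1) * (soliton p ω x ^ ((p + 1) / 2) * cos y)
      = (1 - ω / (4 / ((p - 1) * (p + 3)))) * (soliton p ω x ^ ((p + 1) / 2) * cos y) := by
  simp only [deriv_mul_const_field', deriv_const_mul_field', deriv_cos', deriv.fun_neg,
    Real.deriv_sin]
  rw [div_div_eq_mul_div]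
  linear_combination cos y * soliton_rpow_linearized hp hω x

theorem soliton_cos_eigenfunction (p ω : ℝ) (hp : 1 < p) (hω : 0 < ω) :
    (∀ x y : ℝ,
      -(deriv (deriv (fun t => soliton p ω t ^ ((p + 1) / 2) * Real.cos y)) x)
        - deriv (deriv (fun s => soliton p ω x ^ ((p + 1) / 2) * Real.cos s)) y
        + ω * (soliton p ω x ^ ((p + 1) / 2) * Real.cos y)
        - p * soliton p ω x ^ (p - 1) * (soliton p ω x ^ ((p + 1) / 2) * Real.cos y)
      = (1 - ω / (4 / ((p - 1) * (p + 3)))) * (soliton p ω x ^ ((p + 1) / 2) * Real.cos y)) ∧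
    (ω = 4 / ((p - 1) * (p + 3)) → ∀ x y : ℝ,
      -(deriv (deriv (fun t => soliton p ω t ^ ((p + 1) / 2) * Real.cos y)) x)
        - deriv (deriv (fun s => soliton p ω x ^ ((p + 1) / 2) * Real.cos s)) y
        + ω * (soliton p ω x ^ ((p + 1) / 2) * Real.cos y)
        - p * soliton p ω x ^ (p - 1) * (soliton p ω x ^ ((p + 1) / 2) * Real.cos y)
      = 0) := by
  refine ⟨soliton_cos_linearized hp hω.le, fun hωp x y => ?_⟩
  rw [soliton_cos_linearized hp hω.le x y, hωp, div_self (hωp ▸ hω.ne'), sub_self, zero_mul]
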